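/- arXiv:2310.02833 — 4 statements merged into one kernel-verified Lean document; each statement's English description precedes it below -/
import Mathlib

section
/- Let A be a finite dimensional differential graded algebra over a field k with Jacobson radical J of its underlying ungraded algebra. Then J_- := {r ∈ J | d(r) ∈ J} is a two-sided differential graded ideal of A. -/
/-!
Let `σ` be the sign automorphism `a ↦ (-1)^|a| a` of the graded algebra. The graded Leibniz rule
says `d (a * b) = d a * b + σ a * d b` for all `a b`, and for any `σ`-stable two-sided ideal `I`
this twisted Leibniz rule makes `{r ∈ I | d r ∈ I}` a two-sided ideal; `d² = 0` makes it
`d`-stable. The Jacobson radical is mapped into itself by surjective ring homomorphisms, so it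
is `σ`-stable.
-/

namespace TwoSidedIdeal

theorem mem_jacobson_bot_iff {R : Type*} [Ring R] {x : R} :
    x ∈ (⊥ : TwoSidedIdeal R).jacobson ↔ x ∈ Ring.jacobson R := by
  rw [← Ideal.jacobson_bot, mem_jacobson_iff, Ideal.mem_jacobson_iff]
  simp

theorem map_mem_jacobson_bot {R S F : Type*} [Ring R] [Ring S] [FunLike F R S]
    [RingHomClass F R S] {f : F} (hf : Function.Surjective f) {x : R}
    (hx : x ∈ (⊥ : TwoSidedIdeal R).jacobson) : f x ∈ (⊥ : TwoSidedIdeal S).jacobson :=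
  have : RingHomSurjective (f : R →+* S) := ⟨hf⟩
  mem_jacobson_bot_iff.2 <| Ring.le_comap_jacobson (f : R →+* S) (mem_jacobson_bot_iff.1 hx)

variable {R F G : Type*} [Ring R] [FunLike F R R] [AddMonoidHomClass F R R]
  [FunLike G R R] (I : TwoSidedIdeal R) (d : F) (σ : G)

def derivCore (hσ : ∀ a ∈ I, σ a ∈ I) (hd : ∀ a b, d (a * b) = d a * b + σ a * d b) :
    TwoSidedIdeal R :=
  .mk' {r | r ∈ I ∧ d r ∈ I}
    ⟨I.zero_mem, by simp⟩
    (fun ha hb ↦ ⟨I.add_mem ha.1 hb.1, by simpa using I.add_mem ha.2 hb.2⟩)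
    (fun ha ↦ ⟨I.neg_mem ha.1, by simpa using I.neg_mem ha.2⟩)
    (fun {x a} ha ↦ ⟨I.mul_mem_left x a ha.1, by
      rw [hd]; exact I.add_mem (I.mul_mem_left _ _ ha.1) (I.mul_mem_left _ _ ha.2)⟩)
    (fun {a x} ha ↦ ⟨I.mul_mem_right a x ha.1, by
      rw [hd]; exact I.add_mem (I.mul_mem_right _ _ ha.2) (I.mul_mem_right _ _ (hσ a ha.1))⟩)

variable {I d σ} in
@[simp]
theorem mem_derivCore {hσ : ∀ a ∈ I, σ a ∈ I} {hd : ∀ a b, d (a * b) = d a * b + σ a * d b}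
    {r : R} : r ∈ I.derivCore d σ hσ hd ↔ r ∈ I ∧ d r ∈ I :=
  mem_mk' ..

variable {I d σ} in
theorem map_mem_derivCore {hσ : ∀ a ∈ I, σ a ∈ I}
    {hd : ∀ a b, d (a * b) = d a * b + σ a * d b} (hd2 : ∀ a, d (d a) = 0) {r : R}
    (hr : r ∈ I.derivCore d σ hσ hd) : d r ∈ I.derivCore d σ hσ hd := by
  rw [mem_derivCore, hd2] at *
  exact ⟨hr.2, I.zero_mem⟩

end TwoSidedIdeal

namespace GradedAlgebra

variable {k A : Type*} [Field k] [Ring A] [Algebra k A] (𝒜 : ℤ → Submodule k A) [GradedAlgebra 𝒜]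

noncomputable def signLinearMap : A →ₗ[k] A :=
  (DirectSum.toModule k ℤ A fun n ↦ ((-1 : k) ^ n) • (𝒜 n).subtype).comp
    (DirectSum.decomposeLinearEquiv 𝒜).toLinearMap

variable {𝒜} in
theorem signLinearMap_of_mem {n : ℤ} {a : A} (ha : a ∈ 𝒜 n) :
    signLinearMap 𝒜 a = ((-1 : k) ^ n) • a := by
  simp only [signLinearMap, LinearMap.comp_apply, LinearEquiv.coe_toLinearMap,
    DirectSum.decomposeLinearEquiv_apply, DirectSum.decompose_of_mem 𝒜 ha,
    ← DirectSum.lof_eq_of k, DirectSum.toModule_lof]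
  rfl

theorem signLinearMap_mul (a b : A) :
    signLinearMap 𝒜 (a * b) = signLinearMap 𝒜 a * signLinearMap 𝒜 b := by
  induction a using DirectSum.Decomposition.inductionOn 𝒜 with
  | zero => simp
  | @homogeneous m x =>
    induction b using DirectSum.Decomposition.inductionOn 𝒜 with
    | zero => simp
    | @homogeneous n y =>
      rw [signLinearMap_of_mem (SetLike.mul_mem_graded x.2 y.2), signLinearMap_of_mem x.2,
        signLinearMap_of_mem y.2, smul_mul_smul, ← zpow_add₀ (by norm_num)]
    | add y z hy hz => rw [mul_add, map_add, hy, hz, map_add, mul_add]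
  | add x y hx hy => rw [add_mul, map_add, hx, hy, map_add, add_mul]

noncomputable def signAlgHom : A →ₐ[k] A :=
  .ofLinearMap (signLinearMap 𝒜)
    (by rw [signLinearMap_of_mem (SetLike.one_mem_graded 𝒜), zpow_zero, one_smul])
    (signLinearMap_mul 𝒜)

variable {𝒜} in
theorem signAlgHom_of_mem {n : ℤ} {a : A} (ha : a ∈ 𝒜 n) :
    signAlgHom 𝒜 a = ((-1 : k) ^ n) • a :=
  signLinearMap_of_mem ha

theorem signAlgHom_involutive : Function.Involutive (signAlgHom 𝒜) := by
  intro a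
  induction a using DirectSum.Decomposition.inductionOn 𝒜 with
  | zero => simp
  | @homogeneous n x =>
    rw [signAlgHom_of_mem x.2, map_smul, signAlgHom_of_mem x.2, smul_smul,
      ← zpow_add₀ (by norm_num), Even.neg_one_zpow ⟨n, rfl⟩, one_smul]
  | add x y hx hy => rw [map_add, map_add, hx, hy]

theorem map_mul_eq_add_signAlgHom_mul {F : Type*} [FunLike F A A] [AddMonoidHomClass F A A]
    (d : F)
    (hleib : ∀ n : ℤ, ∀ a ∈ 𝒜 n, ∀ b : A, d (a * b) = d a * b + ((-1 : k) ^ n) • (a * d b))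
    (a b : A) : d (a * b) = d a * b + signAlgHom 𝒜 a * d b := by
  induction a using DirectSum.Decomposition.inductionOn 𝒜 with
  | zero => simp
  | @homogeneous n x => rw [hleib n x x.2, signAlgHom_of_mem x.2, smul_mul_assoc]
  | add x y hx hy =>
    rw [add_mul, map_add, hx, hy, map_add, map_add, add_mul, add_mul]
    abel

end GradedAlgebra

theorem internal_radical_is_dg_ideal_general
    {k A : Type*} [Field k] [Ring A] [Algebra k A]
    -- the grading of the finite dimensional DGA
    (𝒜 : ℤ → Submodule k A) [GradedAlgebra 𝒜]
    -- the differential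
    (d : A →ₗ[k] A)
    (hd2 : ∀ a : A, d (d a) = 0)
    (hleib : ∀ (n : ℤ), ∀ a ∈ 𝒜 n, ∀ b : A,
      d (a * b) = d a * b + ((-1 : k) ^ n) • (a * d b))
    -- the Jacobson radical of the underlying ungraded algebra
    (J : TwoSidedIdeal A) (hJ : J = (⊥ : TwoSidedIdeal A).jacobson)
    -- the internal DG ideal J₋
    (Jm : Set A) (hJm : Jm = {r : A | r ∈ J ∧ d r ∈ J}) :
    -- J₋ is a two-sided ideal closed under the differential
    (0 : A) ∈ Jm ∧
    (∀ a ∈ Jm, ∀ b ∈ Jm, a + b ∈ Jm) ∧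
    (∀ a ∈ Jm, -a ∈ Jm) ∧
    (∀ x : A, ∀ a ∈ Jm, x * a ∈ Jm) ∧
    (∀ x : A, ∀ a ∈ Jm, a * x ∈ Jm) ∧
    (∀ a ∈ Jm, d a ∈ Jm) := by
  have hσJ : ∀ a ∈ J, GradedAlgebra.signAlgHom 𝒜 a ∈ J := fun _ ↦ hJ ▸
    TwoSidedIdeal.map_mem_jacobson_bot (GradedAlgebra.signAlgHom_involutive 𝒜).surjective
  let I := J.derivCore d (GradedAlgebra.signAlgHom 𝒜) hσJ
    (GradedAlgebra.map_mul_eq_add_signAlgHom_mul 𝒜 d hleib)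
  have hI : Jm = I := hJm ▸ Set.ext fun _ ↦ TwoSidedIdeal.mem_derivCore.symm
  rw [hI]
  refine ⟨I.zero_mem, fun _ ha _ hb ↦ I.add_mem ha hb, fun _ ↦ I.neg_mem,
    fun x a ↦ I.mul_mem_left x a, fun x a ↦ I.mul_mem_right a x,
    fun _ ↦ TwoSidedIdeal.map_mem_derivCore hd2⟩

theorem internal_radical_is_dg_ideal
    {k A : Type*} [Field k] [Ring A] [Algebra k A] [FiniteDimensional k A]
    -- the grading of the finite dimensional DGA
    (𝒜 : ℤ → Submodule k A) [GradedAlgebra 𝒜]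
    -- the differential
    (d : A →ₗ[k] A)
    (hd2 : ∀ a : A, d (d a) = 0)
    (hdeg : ∀ (n : ℤ), ∀ a ∈ 𝒜 n, d a ∈ 𝒜 (n + 1))
    (hleib : ∀ (n : ℤ), ∀ a ∈ 𝒜 n, ∀ b : A,
      d (a * b) = d a * b + ((-1 : k) ^ n) • (a * d b))
    -- the Jacobson radical of the underlying ungraded algebra
    (J : TwoSidedIdeal A) (hJ : J = (⊥ : TwoSidedIdeal A).jacobson)
    -- the internal DG ideal J₋
    (Jm : Set A) (hJm : Jm = {r : A | r ∈ J ∧ d r ∈ J}) :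
    -- J₋ is a two-sided ideal closed under the differential
    (0 : A) ∈ Jm ∧
    (∀ a ∈ Jm, ∀ b ∈ Jm, a + b ∈ Jm) ∧
    (∀ a ∈ Jm, -a ∈ Jm) ∧
    (∀ x : A, ∀ a ∈ Jm, x * a ∈ Jm) ∧
    (∀ x : A, ∀ a ∈ Jm, a * x ∈ Jm) ∧
    (∀ a ∈ Jm, d a ∈ Jm) :=
  internal_radical_is_dg_ideal_general 𝒜 d hd2 hleib J hJ Jm hJm
end

section
/- Let A be a finite dimensional DGA with Jacobson radical J. The inclusion of chain complexes J_- → J_+ (where J_- = {r ∈ J | d(r) ∈ J} and J_+ = J + d(J)) is a quasi-isomorphism, i.e., it induces an isomorphism on all cohomology groups. -/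
/-!
Injectivity is immediate since `d (a + d b) = d a`.  For surjectivity, a degree `n` cocycle
`a + d b` of `J₊` differs from the degree `n` component `aₙ` of `a` by `d bₙ₋₁`, and `aₙ` is a
cocycle of `J₋` once homogeneous components of elements of `J` lie in `J`.  That holds in every
graded semiprimary algebra: the lowest-degree forms of elements of `J` span a left ideal `I` with
`I ^ (p + 1)` inside the lowest forms of `J ^ (p + 1) = 0`, so `I` is nilpotent and hence `I ⊆ J`;
subtracting lowest forms one at a time then puts every component of an element of `J` in `J`.
-/

open DirectSum

theorem DirectSum.coe_decompose_map_add {ι R M : Type*} [DecidableEq ι] [Add ι]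
    [IsRightCancelAdd ι] [Semiring R] [AddCommMonoid M] [Module R M] (𝒜 : ι → Submodule R M)
    [Decomposition 𝒜] (f : M →ₗ[R] M) {δ : ι} (hf : ∀ i, ∀ a ∈ 𝒜 i, f a ∈ 𝒜 (i + δ))
    (a : M) (n : ι) : (decompose 𝒜 (f a) (n + δ) : M) = f (decompose 𝒜 a n) := by
  induction a using DirectSum.Decomposition.inductionOn 𝒜 with
  | zero => simp
  | @homogeneous i m =>
    by_cases h : i = n
    · subst h
      rw [decompose_of_mem_same 𝒜 (hf i m m.2), decompose_of_mem_same 𝒜 m.2]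
    · rw [decompose_of_mem_ne 𝒜 (hf i m m.2) (fun h' => h (add_right_cancel h')),
        decompose_of_mem_ne 𝒜 m.2 h, map_zero]
  | add a b ha hb => rw [map_add, decompose_add, DirectSum.add_apply, Submodule.coe_add, ha, hb,
      decompose_add, DirectSum.add_apply, Submodule.coe_add, map_add]

section Decomposition

variable {ι R M : Type*} [DecidableEq ι] [Ring R] [AddCommGroup M] [Module R M]
  {𝒜 : ι → Submodule R M} [Decomposition 𝒜]

theorem DirectSum.decompose_sub_decompose_apply_self (a : M) (c : ι) :
    decompose 𝒜 (a - decompose 𝒜 a c) c = 0 := by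
  rw [decompose_sub, decompose_coe, DirectSum.sub_apply, DirectSum.of_eq_same, sub_self]

theorem DirectSum.decompose_sub_decompose_apply_of_ne (a : M) {c j : ι} (h : j ≠ c) :
    decompose 𝒜 (a - decompose 𝒜 a c) j = decompose 𝒜 a j := by
  rw [decompose_sub, decompose_coe, DirectSum.sub_apply, DirectSum.of_eq_of_ne c j _ h, sub_zero]

theorem DirectSum.support_decompose_sub_decompose [∀ i (x : 𝒜 i), Decidable (x ≠ 0)]
    (a : M) (c : ι) :
    (decompose 𝒜 (a - decompose 𝒜 a c)).support = (decompose 𝒜 a).support.erase c := by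
  ext j
  rw [Finset.mem_erase, DFinsupp.mem_support_iff, DFinsupp.mem_support_iff]
  by_cases hj : j = c
  · rw [hj, decompose_sub_decompose_apply_self]
    simp
  · rw [decompose_sub_decompose_apply_of_ne a hj]
    simp [hj]

end Decomposition

section LowestForms

variable {ι R A : Type*} [DecidableEq ι] [AddCommMonoid ι] [LinearOrder ι]
  [CommRing R] [Ring A] [Algebra R A] (𝒜 : ι → Submodule R A) [GradedAlgebra 𝒜]

/-- Lowest forms are taken in the weak sense (`z` has no components below `c`, but `z_c` may be
`0`), which makes them multiplicative. -/
def Submodule.lowestForms (P : Submodule R A) : Submodule R A :=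
  Submodule.span R {a | ∃ z ∈ P, ∃ c, (∀ i < c, decompose 𝒜 z i = 0) ∧ a = decompose 𝒜 z c}

variable {𝒜}

theorem Submodule.lowestForms_mono {P Q : Submodule R A} (h : P ≤ Q) :
    P.lowestForms 𝒜 ≤ Q.lowestForms 𝒜 :=
  Submodule.span_mono fun _ ⟨z, hz, c, hc, ha⟩ => ⟨z, h hz, c, hc, ha⟩

theorem Submodule.lowestForms_bot : (⊥ : Submodule R A).lowestForms 𝒜 = ⊥ := by
  refine eq_bot_iff.mpr (Submodule.span_le.mpr ?_)
  rintro _ ⟨z, hz, c, -, rfl⟩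
  simp [(Submodule.mem_bot R).mp hz]

theorem Submodule.lowestForms_top : (⊤ : Submodule R A).lowestForms 𝒜 = ⊤ := by
  classical
  refine eq_top_iff.mpr fun a _ => ?_
  rw [← sum_support_decompose 𝒜 a]
  refine Submodule.sum_mem _ fun i _ => Submodule.subset_span
    ⟨_, Submodule.mem_top, i, fun j hj => ?_, (decompose_of_mem_same 𝒜 (decompose 𝒜 a i).2).symm⟩
  exact Subtype.ext (decompose_of_mem_ne 𝒜 (decompose 𝒜 a i).2 hj.ne')

theorem Submodule.decompose_mem_of_lowestForms_le {P : Submodule R A}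
    (hP : P.lowestForms 𝒜 ≤ P) {a : A} (ha : a ∈ P) (i : ι) : (decompose 𝒜 a i : A) ∈ P := by
  classical
  induction hcard : (decompose 𝒜 a).support.card generalizing a with
  | zero =>
    rw [DFinsupp.notMem_support_iff.mp (by simp [Finset.card_eq_zero.mp hcard])]
    exact P.zero_mem
  | succ N ih =>
    have hne : (decompose 𝒜 a).support.Nonempty := Finset.card_pos.mp (by omega)
    set c := (decompose 𝒜 a).support.min' hne
    have hlow : ∀ j < c, decompose 𝒜 a j = 0 := fun j hj =>
      DFinsupp.notMem_support_iff.mp fun hmem => (Finset.min'_le _ j hmem).not_gt hj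
    have hc : (decompose 𝒜 a c : A) ∈ P := hP (Submodule.subset_span ⟨a, ha, c, hlow, rfl⟩)
    have hrest := ih (P.sub_mem ha hc) (by
      rw [support_decompose_sub_decompose, Finset.card_erase_of_mem (Finset.min'_mem _ _)]
      omega)
    by_cases hic : i = c
    · exact hic ▸ hc
    · rwa [decompose_sub_decompose_apply_of_ne a hic] at hrest

end LowestForms

section LowestFormsMul

variable {ι R A : Type*} [DecidableEq ι] [AddCommMonoid ι] [LinearOrder ι]
  [IsOrderedCancelAddMonoid ι] [CommRing R] [Ring A] [Algebra R A]
  {𝒜 : ι → Submodule R A} [GradedAlgebra 𝒜]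

theorem DirectSum.decompose_mul_eq_zero_of_forall_lt {x y : A} {m n : ι}
    (hx : ∀ i < m, decompose 𝒜 x i = 0) (hy : ∀ j < n, decompose 𝒜 y j = 0) :
    ∀ k < m + n, decompose 𝒜 (x * y) k = 0 := by
  rw [decompose_mul]
  exact mul_apply_eq_zero hx hy

theorem DirectSum.coe_decompose_mul_add_of_forall_lt {x y : A} {m n : ι}
    (hx : ∀ i < m, decompose 𝒜 x i = 0) (hy : ∀ j < n, decompose 𝒜 y j = 0) :
    (decompose 𝒜 (x * y) (m + n) : A) = decompose 𝒜 x m * decompose 𝒜 y n := by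
  classical
  rw [decompose_mul, coe_mul_apply]
  refine Finset.sum_eq_single (m, n) (fun ij hij hne => ?_) (fun hmn => ?_)
  · obtain ⟨hmem, hsum⟩ := Finset.mem_filter.mp hij
    obtain ⟨hi, hj⟩ := Finset.mem_product.mp hmem
    have hmi : m ≤ ij.1 := not_lt.mp fun h => DFinsupp.mem_support_iff.mp hi (hx _ h)
    have hnj : n ≤ ij.2 := not_lt.mp fun h => DFinsupp.mem_support_iff.mp hj (hy _ h)
    obtain ⟨h1, h2⟩ := (add_eq_add_iff_eq_and_eq hmi hnj).mp hsum.symm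
    exact absurd (Prod.ext h1.symm h2.symm) hne
  · simp only [Finset.mem_filter, Finset.mem_product, DFinsupp.mem_support_iff, and_true,
      not_and_or, not_not] at hmn
    rcases hmn with h | h <;> simp [h]

theorem Submodule.lowestForms_mul_le (P Q : Submodule R A) :
    P.lowestForms 𝒜 * Q.lowestForms 𝒜 ≤ (P * Q).lowestForms 𝒜 := by
  rw [Submodule.lowestForms, Submodule.lowestForms, Submodule.span_mul_span]
  refine Submodule.span_mono ?_
  rintro _ ⟨_, ⟨z, hz, c, hzc, rfl⟩, _, ⟨w, hw, e, hwe, rfl⟩, rfl⟩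
  exact ⟨z * w, Submodule.mul_mem_mul hz hw, c + e, decompose_mul_eq_zero_of_forall_lt hzc hwe,
    (coe_decompose_mul_add_of_forall_lt hzc hwe).symm⟩

theorem Submodule.lowestForms_pow_le (P : Submodule R A) (n : ℕ) :
    P.lowestForms 𝒜 ^ (n + 1) ≤ (P ^ (n + 1)).lowestForms 𝒜 := by
  induction n with
  | zero => simp
  | succ n ih =>
    rw [Submodule.pow_succ, Submodule.pow_succ P]
    exact (mul_le_mul' ih le_rfl).trans (Submodule.lowestForms_mul_le _ _)

end LowestFormsMul

section Jacobson

variable {R A : Type*} [CommRing R] [Ring A] [Algebra R A]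

theorem Submodule.le_jacobson_of_top_mul_le_of_pow_eq_bot {I : Submodule R A} (hI : ⊤ * I ≤ I)
    {n : ℕ} (hn : I ^ n = ⊥) : I ≤ (Ring.jacobson A).restrictScalars R := by
  intro x hx
  rw [Submodule.restrictScalars_mem, ← Ideal.jacobson_bot, Ideal.mem_jacobson_iff]
  intro y
  have hyx : y * x ∈ I := hI (Submodule.mul_mem_mul Submodule.mem_top hx)
  have hnil : (y * x) ^ n = 0 := by simpa [hn] using Submodule.pow_mem_pow I hyx n
  obtain ⟨u, hu⟩ := IsNilpotent.isUnit_add_one ⟨n, hnil⟩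
  have hinv : (↑u⁻¹ : A) * (y * x + 1) = 1 := by rw [← hu, Units.inv_mul]
  refine ⟨↑u⁻¹, ?_⟩
  rw [Ideal.mem_bot, sub_eq_zero, ← hinv]
  noncomm_ring

theorem TwoSidedIdeal.mem_jacobson_bot_iff_s4 {x : A} :
    x ∈ (⊥ : TwoSidedIdeal A).jacobson ↔ x ∈ Ring.jacobson A := by
  simp [TwoSidedIdeal.mem_jacobson_iff, ← Ideal.jacobson_bot, Ideal.mem_jacobson_iff]

theorem exists_restrictScalars_jacobson_pow_eq_bot [IsSemiprimaryRing A] :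
    ∃ n : ℕ, ((Ring.jacobson A).restrictScalars R) ^ (n + 1) = ⊥ := by
  obtain ⟨n, hn⟩ := IsSemiprimaryRing.isNilpotent (R := A)
  refine ⟨n, ?_⟩
  rw [← Submodule.restrictScalars_pow n.add_one_ne_zero, Submodule.pow_succ, hn,
    Submodule.zero_eq_bot, Submodule.bot_mul, Submodule.restrictScalars_bot]

theorem DirectSum.decompose_mem_jacobson {ι : Type*} [DecidableEq ι] [AddCommMonoid ι]
    [LinearOrder ι] [IsOrderedCancelAddMonoid ι] [IsSemiprimaryRing A] (𝒜 : ι → Submodule R A)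
    [GradedAlgebra 𝒜] {a : A} (ha : a ∈ Ring.jacobson A) (i : ι) :
    (decompose 𝒜 a i : A) ∈ Ring.jacobson A := by
  set J := (Ring.jacobson A).restrictScalars R
  obtain ⟨n, hn⟩ := exists_restrictScalars_jacobson_pow_eq_bot (R := R) (A := A)
  have hJ : ⊤ * J ≤ J := Submodule.mul_le.mpr fun x _ y hy => Ideal.mul_mem_left _ x hy
  have hmul : ⊤ * J.lowestForms 𝒜 ≤ J.lowestForms 𝒜 := by
    calc ⊤ * J.lowestForms 𝒜 = (⊤ : Submodule R A).lowestForms 𝒜 * J.lowestForms 𝒜 := by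
          rw [Submodule.lowestForms_top]
      _ ≤ (⊤ * J).lowestForms 𝒜 := Submodule.lowestForms_mul_le _ _
      _ ≤ J.lowestForms 𝒜 := Submodule.lowestForms_mono hJ
  have hpow : J.lowestForms 𝒜 ^ (n + 1) = ⊥ := eq_bot_iff.mpr <| by
    calc J.lowestForms 𝒜 ^ (n + 1) ≤ (J ^ (n + 1)).lowestForms 𝒜 := Submodule.lowestForms_pow_le _ n
      _ = ⊥ := by rw [hn, Submodule.lowestForms_bot]
  exact Submodule.decompose_mem_of_lowestForms_le
    (Submodule.le_jacobson_of_top_mul_le_of_pow_eq_bot hmul hpow) ha i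

end Jacobson

theorem internal_to_external_radical_quasi_iso_general
    {k A : Type*} [Field k] [Ring A] [Algebra k A] [FiniteDimensional k A]
    (𝒜 : ℤ → Submodule k A) [GradedAlgebra 𝒜]
    (d : A →ₗ[k] A)
    (hd2 : ∀ a : A, d (d a) = 0)
    (hdeg : ∀ (n : ℤ), ∀ a ∈ 𝒜 n, d a ∈ 𝒜 (n + 1))
    (J : TwoSidedIdeal A) (hJ : J = (⊥ : TwoSidedIdeal A).jacobson)
    (Jm : Set A) (hJm : Jm = {r : A | r ∈ J ∧ d r ∈ J})
    (Jp : Set A) (hJp : Jp = {x : A | ∃ a ∈ J, ∃ b ∈ J, x = a + d b}) :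
    -- surjectivity on cohomology: every cocycle of `J₊` is, up to a coboundary of `J₊`,
    -- a cocycle of `J₋`
    (∀ n : ℤ, ∀ x ∈ Jp, x ∈ 𝒜 n → d x = 0 →
      ∃ y ∈ Jm, y ∈ 𝒜 n ∧ d y = 0 ∧ ∃ z ∈ Jp, z ∈ 𝒜 (n - 1) ∧ x = y + d z) ∧
    -- injectivity on cohomology: a cocycle of `J₋` which bounds in `J₊` bounds in `J₋`
    (∀ n : ℤ, ∀ y ∈ Jm, y ∈ 𝒜 n → d y = 0 →
      (∃ z ∈ Jp, d z = y) → ∃ w ∈ Jm, d w = y) := by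
  have := IsArtinianRing.of_finite k A
  have hcomp : ∀ a ∈ J, ∀ i, (decompose 𝒜 a i : A) ∈ J := by
    subst hJ
    simp_rw [TwoSidedIdeal.mem_jacobson_bot_iff_s4]
    exact fun a ha i => decompose_mem_jacobson 𝒜 ha i
  subst hJm hJp
  refine ⟨fun n x ⟨a, ha, b, hb, hx⟩ hxn hdx => ?_,
    fun n y hy _ _ ⟨z, ⟨a, ha, b, hb, hz⟩, hdz⟩ => ?_⟩
  · have hda : d a = 0 := by simpa [hx, hd2] using hdx
    have hdy : d (decompose 𝒜 a n) = 0 := by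
      rw [← coe_decompose_map_add 𝒜 d hdeg, hda, decompose_zero]
      rfl
    refine ⟨decompose 𝒜 a n, ⟨hcomp a ha n, hdy ▸ J.zero_mem⟩, (decompose 𝒜 a n).2, hdy,
      decompose 𝒜 b (n - 1), ⟨_, hcomp b hb (n - 1), 0, J.zero_mem, by simp⟩,
      (decompose 𝒜 b (n - 1)).2, ?_⟩
    calc x = decompose 𝒜 x n := (decompose_of_mem_same 𝒜 hxn).symm
      _ = decompose 𝒜 a n + decompose 𝒜 (d b) (n - 1 + 1) := by
        rw [hx, sub_add_cancel, decompose_add, DirectSum.add_apply, Submodule.coe_add]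
      _ = _ := by rw [coe_decompose_map_add 𝒜 d hdeg]
  · have hda : d a = y := by simpa [hz, hd2] using hdz
    exact ⟨a, ⟨ha, hda ▸ hy.1⟩, hda⟩

theorem internal_to_external_radical_quasi_iso
    {k A : Type*} [Field k] [Ring A] [Algebra k A] [FiniteDimensional k A]
    (𝒜 : ℤ → Submodule k A) [GradedAlgebra 𝒜]
    (d : A →ₗ[k] A)
    (hd2 : ∀ a : A, d (d a) = 0)
    (hdeg : ∀ (n : ℤ), ∀ a ∈ 𝒜 n, d a ∈ 𝒜 (n + 1))
    (hleib : ∀ (n : ℤ), ∀ a ∈ 𝒜 n, ∀ b : A,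
      d (a * b) = d a * b + ((-1 : k) ^ n) • (a * d b))
    (J : TwoSidedIdeal A) (hJ : J = (⊥ : TwoSidedIdeal A).jacobson)
    (Jm : Set A) (hJm : Jm = {r : A | r ∈ J ∧ d r ∈ J})
    (Jp : Set A) (hJp : Jp = {x : A | ∃ a ∈ J, ∃ b ∈ J, x = a + d b}) :
    -- surjectivity on cohomology: every cocycle of `J₊` is, up to a coboundary of `J₊`,
    -- a cocycle of `J₋`
    (∀ n : ℤ, ∀ x ∈ Jp, x ∈ 𝒜 n → d x = 0 →
      ∃ y ∈ Jm, y ∈ 𝒜 n ∧ d y = 0 ∧ ∃ z ∈ Jp, z ∈ 𝒜 (n - 1) ∧ x = y + d z) ∧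
    -- injectivity on cohomology: a cocycle of `J₋` which bounds in `J₊` bounds in `J₋`
    (∀ n : ℤ, ∀ y ∈ Jm, y ∈ 𝒜 n → d y = 0 →
      (∃ z ∈ Jp, d z = y) → ∃ w ∈ Jm, d w = y) :=
  internal_to_external_radical_quasi_iso_general 𝒜 d hd2 hdeg J hJ Jm hJm Jp hJp
end

section
/- Let A and B be graded k-algebras whose underlying ungraded algebras are separable over k. Then the underlying ungraded algebra of the graded (Koszul-signed) tensor product A ⊗ᴳ B is separable over k. Explicitly, if p^A = Σᵢ aᵢ ⊗ aᵢ' and p^B = Σⱼ bⱼ ⊗ bⱼ' are separability idempotents with all aᵢ, aᵢ', bⱼ, bⱼ' homogeneous and |aᵢ| = −|aᵢ'|, |bⱼ| = −|bⱼ'|, then p := Σᵢⱼ (−1)^{|bⱼ||aᵢ'|} (aᵢ ⊗ᴳ bⱼ) ⊗ (aᵢ' ⊗ᴳ bⱼ') is a separability idempotent for A ⊗ᴳ B. -/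
open scoped TensorProduct

/-- A separability idempotent for a `k`-algebra `R`: an element `p ∈ R ⊗ₖ R` with
`μ(p) = 1` and `x·p = p·x` (i.e. `(x ⊗ 1) p = p (1 ⊗ x)`) for all `x ∈ R`. -/
def IsSepIdem (k R : Type*) [CommSemiring k] [Ring R] [Algebra k R]
    (p : R ⊗[k] R) : Prop :=
  LinearMap.mul' k R p = 1 ∧ ∀ x : R, ((x ⊗ₜ[k] (1 : R)) * p = p * ((1 : R) ⊗ₜ[k] x))

section AuxGraded

variable {k : Type*} [Field k]

lemma neg_one_zpow_congr {e₁ e₂ : ℤ} (h : Even (e₁ - e₂)) :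
    ((-1 : k) ^ e₁) = (-1 : k) ^ e₂ := by
  obtain ⟨c, hc⟩ := h
  have he : e₁ = e₂ + (c + c) := by omega
  have h1 : ((-1 : k)) ^ (c + c) = 1 := by
    rw [zpow_add₀ (by norm_num : (-1:k) ≠ 0), ← mul_zpow]; norm_num
  rw [he, zpow_add₀ (by norm_num : (-1:k) ≠ 0), h1, mul_one]

variable {A : Type*} [Ring A] [Algebra k A] (𝒜 : ℤ → Submodule k A) [GradedAlgebra 𝒜]

noncomputable def gScale (f : ℤ → k) : A →ₗ[k] A :=
  (DirectSum.toModule k ℤ A (fun p => f p • (𝒜 p).subtype)).comp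
    (DirectSum.decomposeLinearEquiv 𝒜).toLinearMap

lemma gScale_apply (f : ℤ → k) {p : ℤ} {x : A} (hx : x ∈ 𝒜 p) :
    gScale 𝒜 f x = f p • x := by
  lift x to 𝒜 p using hx
  simp [gScale, DirectSum.decompose_coe, ← DirectSum.lof_eq_of k, DirectSum.toModule_lof]

variable {B : Type*} [Ring B] [Algebra k B] (ℬ : ℤ → Submodule k B) [GradedAlgebra ℬ]

noncomputable def gtau : (A ⊗[k] A) ⊗[k] (B ⊗[k] B) →ₗ[k] (A ⊗[k] A) ⊗[k] (B ⊗[k] B) :=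
  TensorProduct.map
    (TensorProduct.map LinearMap.id (gScale 𝒜 (fun p => if Even p then 1 else 0)))
    LinearMap.id
  + TensorProduct.map
      (TensorProduct.map LinearMap.id (gScale 𝒜 (fun p => if Even p then 0 else 1)))
      (TensorProduct.map (gScale ℬ (fun r => (-1 : k) ^ r)) LinearMap.id)

lemma gtau_apply {p' r : ℤ} (x : A) {x' : A} (hx' : x' ∈ 𝒜 p') {y : B} (hy : y ∈ ℬ r)
    (y' : B) :
    gtau 𝒜 ℬ ((x ⊗ₜ[k] x') ⊗ₜ[k] (y ⊗ₜ[k] y'))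
      = ((-1 : k) ^ (p' * r)) • ((x ⊗ₜ[k] x') ⊗ₜ[k] (y ⊗ₜ[k] y')) := by
  simp only [gtau, LinearMap.add_apply, TensorProduct.map_tmul, LinearMap.id_apply,
    gScale_apply 𝒜 _ hx', gScale_apply ℬ _ hy]
  by_cases h : Even p'
  · rw [if_pos h, if_pos h, one_smul, zero_smul, TensorProduct.tmul_zero,
      TensorProduct.zero_tmul, add_zero, Even.neg_one_zpow (h.mul_right r), one_smul]
  · rw [if_neg h, if_neg h, one_smul, zero_smul, TensorProduct.tmul_zero,
      TensorProduct.zero_tmul, zero_add]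
    obtain ⟨c, hc⟩ := Int.not_even_iff_odd.mp h
    rw [← TensorProduct.smul_tmul', TensorProduct.tmul_smul,
      neg_one_zpow_congr (e₁ := p' * r) (e₂ := r) ⟨c * r, by rw [hc]; ring⟩]

variable {C : Type*} [Ring C] [Algebra k C]

noncomputable def gpsi (φ : A ⊗[k] B ≃ₗ[k] C) :
    (A ⊗[k] A) ⊗[k] (B ⊗[k] B) →ₗ[k] C ⊗[k] C :=
  (TensorProduct.map φ.toLinearMap φ.toLinearMap).comp
    ((TensorProduct.tensorTensorTensorComm k A A B B).toLinearMap.comp (gtau 𝒜 ℬ))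

lemma gpsi_apply (φ : A ⊗[k] B ≃ₗ[k] C) {p' r : ℤ} (x : A) {x' : A} (hx' : x' ∈ 𝒜 p')
    {y : B} (hy : y ∈ ℬ r) (y' : B) :
    gpsi 𝒜 ℬ φ ((x ⊗ₜ[k] x') ⊗ₜ[k] (y ⊗ₜ[k] y'))
      = ((-1 : k) ^ (p' * r)) • (φ (x ⊗ₜ[k] y) ⊗ₜ[k] φ (x' ⊗ₜ[k] y')) := by
  simp only [gpsi, LinearMap.comp_apply, gtau_apply 𝒜 ℬ x hx' hy y', map_smul,
    LinearEquiv.coe_coe, TensorProduct.tensorTensorTensorComm_tmul, TensorProduct.map_tmul]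

end AuxGraded

theorem graded_tensor_separable
    {k A B C : Type*} [Field k] [Ring A] [Algebra k A] [Ring B] [Algebra k B]
    [Ring C] [Algebra k C]
    (𝒜 : ℤ → Submodule k A) [GradedAlgebra 𝒜]
    (ℬ : ℤ → Submodule k B) [GradedAlgebra ℬ]
    -- `C` realises the graded (Koszul-signed) tensor product `A ⊗ᴳ B`
    (φ : A ⊗[k] B ≃ₗ[k] C)
    (hone : φ ((1 : A) ⊗ₜ[k] (1 : B)) = 1)
    (hmul : ∀ (m n m' n' : ℤ), ∀ x ∈ 𝒜 m, ∀ y ∈ ℬ n, ∀ x' ∈ 𝒜 m', ∀ y' ∈ ℬ n',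
      φ (x ⊗ₜ[k] y) * φ (x' ⊗ₜ[k] y')
        = ((-1 : k) ^ (n * m')) • φ ((x * x') ⊗ₜ[k] (y * y')))
    -- homogeneous separability idempotent of `A`
    {ι : Type*} [Fintype ι] (a a' : ι → A) (na : ι → ℤ)
    (ha : ∀ i, a i ∈ 𝒜 (na i)) (ha' : ∀ i, a' i ∈ 𝒜 (-(na i)))
    (hpA : IsSepIdem k A (∑ i, a i ⊗ₜ[k] a' i))
    -- homogeneous separability idempotent of `B`
    {κ : Type*} [Fintype κ] (b b' : κ → B) (nb : κ → ℤ)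
    (hb : ∀ j, b j ∈ ℬ (nb j)) (hb' : ∀ j, b' j ∈ ℬ (-(nb j)))
    (hpB : IsSepIdem k B (∑ j, b j ⊗ₜ[k] b' j)) :
    -- the explicit Koszul-signed element is a separability idempotent for `A ⊗ᴳ B`
    IsSepIdem k C (∑ i, ∑ j,
      ((-1 : k) ^ (nb j * (-(na i)))) •
        (φ (a i ⊗ₜ[k] b j) ⊗ₜ[k] φ (a' i ⊗ₜ[k] b' j))) ∧
    -- in particular the underlying ungraded algebra of `A ⊗ᴳ B` is separable over `k`
    ∃ p : C ⊗[k] C, IsSepIdem k C p := by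
  classical
  have neg1ne : (-1 : k) ≠ 0 := by norm_num
  set pC : C ⊗[k] C := ∑ i, ∑ j,
      ((-1 : k) ^ (nb j * (-(na i)))) •
        (φ (a i ⊗ₜ[k] b j) ⊗ₜ[k] φ (a' i ⊗ₜ[k] b' j)) with hpC
  have hμA : ∑ i, a i * a' i = 1 := by
    have h := hpA.1
    rw [map_sum] at h
    simpa only [LinearMap.mul'_apply] using h
  have hμB : ∑ j, b j * b' j = 1 := by
    have h := hpB.1
    rw [map_sum] at h
    simpa only [LinearMap.mul'_apply] using h
  have hsep : IsSepIdem k C pC := by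
    constructor
    · -- multiplicativity
      have e1 : LinearMap.mul' k C pC
          = ∑ i, ∑ j, φ ((a i * a' i) ⊗ₜ[k] (b j * b' j)) := by
        rw [hpC, map_sum]
        refine Finset.sum_congr rfl fun i _ => ?_
        rw [map_sum]
        refine Finset.sum_congr rfl fun j _ => ?_
        rw [map_smul, LinearMap.mul'_apply,
          hmul (na i) (nb j) (-(na i)) (-(nb j)) (a i) (ha i) (b j) (hb j)
            (a' i) (ha' i) (b' j) (hb' j),
          smul_smul, ← zpow_add₀ neg1ne,
          Even.neg_one_zpow ⟨nb j * (-(na i)), rfl⟩, one_smul]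
      have e2 : ∑ i, ∑ j, φ ((a i * a' i) ⊗ₜ[k] (b j * b' j))
          = φ ((∑ i, a i * a' i) ⊗ₜ[k] (∑ j, b j * b' j)) := by
        rw [TensorProduct.sum_tmul, map_sum]
        exact Finset.sum_congr rfl fun i _ => by rw [TensorProduct.tmul_sum, map_sum]
      rw [e1, e2, hμA, hμB, hone]
    · -- commutation
      have key : ∀ (m n : ℤ) (u : A) (v : B), u ∈ 𝒜 m → v ∈ ℬ n →
          (φ (u ⊗ₜ[k] v) ⊗ₜ[k] (1 : C)) * pC = pC * ((1 : C) ⊗ₜ[k] φ (u ⊗ₜ[k] v)) := by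
        intro m n u v hu hv
        have hL : (φ (u ⊗ₜ[k] v) ⊗ₜ[k] (1 : C)) * pC
            = gpsi 𝒜 ℬ φ (((u ⊗ₜ[k] (1 : A)) * ∑ i, a i ⊗ₜ[k] a' i) ⊗ₜ[k]
                ((v ⊗ₜ[k] (1 : B)) * ∑ j, b j ⊗ₜ[k] b' j)) := by
          have eL : (φ (u ⊗ₜ[k] v) ⊗ₜ[k] (1 : C)) * pC
              = ∑ i, ∑ j, ((-1 : k) ^ (nb j * (-(na i))) * (-1 : k) ^ (n * na i)) •
                  (φ ((u * a i) ⊗ₜ[k] (v * b j)) ⊗ₜ[k] φ (a' i ⊗ₜ[k] b' j)) := by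
            rw [hpC, Finset.mul_sum]
            refine Finset.sum_congr rfl fun i _ => ?_
            rw [Finset.mul_sum]
            refine Finset.sum_congr rfl fun j _ => ?_
            rw [mul_smul_comm, Algebra.TensorProduct.tmul_mul_tmul, one_mul,
              hmul m n (na i) (nb j) u hu v hv (a i) (ha i) (b j) (hb j),
              ← TensorProduct.smul_tmul', smul_smul]
          have eR : gpsi 𝒜 ℬ φ (((u ⊗ₜ[k] (1 : A)) * ∑ i, a i ⊗ₜ[k] a' i) ⊗ₜ[k]
                ((v ⊗ₜ[k] (1 : B)) * ∑ j, b j ⊗ₜ[k] b' j))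
              = ∑ i, ∑ j, ((-1 : k) ^ ((-(na i)) * (n + nb j))) •
                  (φ ((u * a i) ⊗ₜ[k] (v * b j)) ⊗ₜ[k] φ (a' i ⊗ₜ[k] b' j)) := by
            rw [Finset.mul_sum, Finset.mul_sum]
            simp only [Algebra.TensorProduct.tmul_mul_tmul, one_mul]
            rw [TensorProduct.sum_tmul, map_sum]
            refine Finset.sum_congr rfl fun i _ => ?_
            rw [TensorProduct.tmul_sum, map_sum]
            refine Finset.sum_congr rfl fun j _ => ?_
            exact gpsi_apply 𝒜 ℬ φ (u * a i) (ha' i)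
              (SetLike.mul_mem_graded hv (hb j)) (b' j)
          rw [eL, eR]
          refine Finset.sum_congr rfl fun i _ => Finset.sum_congr rfl fun j _ => ?_
          rw [← zpow_add₀ neg1ne,
            neg_one_zpow_congr (e₁ := nb j * (-(na i)) + n * na i)
              (e₂ := (-(na i)) * (n + nb j)) ⟨na i * n, by ring⟩]
        have hR : pC * ((1 : C) ⊗ₜ[k] φ (u ⊗ₜ[k] v))
            = gpsi 𝒜 ℬ φ (((∑ i, a i ⊗ₜ[k] a' i) * ((1 : A) ⊗ₜ[k] u)) ⊗ₜ[k]
                ((∑ j, b j ⊗ₜ[k] b' j) * ((1 : B) ⊗ₜ[k] v))) := by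
          have eL : pC * ((1 : C) ⊗ₜ[k] φ (u ⊗ₜ[k] v))
              = ∑ i, ∑ j, ((-1 : k) ^ (nb j * (-(na i))) * (-1 : k) ^ ((-(nb j)) * m)) •
                  (φ (a i ⊗ₜ[k] b j) ⊗ₜ[k] φ ((a' i * u) ⊗ₜ[k] (b' j * v))) := by
            rw [hpC, Finset.sum_mul]
            refine Finset.sum_congr rfl fun i _ => ?_
            rw [Finset.sum_mul]
            refine Finset.sum_congr rfl fun j _ => ?_
            rw [smul_mul_assoc, Algebra.TensorProduct.tmul_mul_tmul, mul_one,
              hmul (-(na i)) (-(nb j)) m n (a' i) (ha' i) (b' j) (hb' j) u hu v hv,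
              TensorProduct.tmul_smul, smul_smul]
          have eR : gpsi 𝒜 ℬ φ (((∑ i, a i ⊗ₜ[k] a' i) * ((1 : A) ⊗ₜ[k] u)) ⊗ₜ[k]
                ((∑ j, b j ⊗ₜ[k] b' j) * ((1 : B) ⊗ₜ[k] v)))
              = ∑ i, ∑ j, ((-1 : k) ^ ((-(na i) + m) * nb j)) •
                  (φ (a i ⊗ₜ[k] b j) ⊗ₜ[k] φ ((a' i * u) ⊗ₜ[k] (b' j * v))) := by
            rw [Finset.sum_mul, Finset.sum_mul]
            simp only [Algebra.TensorProduct.tmul_mul_tmul, mul_one]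
            rw [TensorProduct.sum_tmul, map_sum]
            refine Finset.sum_congr rfl fun i _ => ?_
            rw [TensorProduct.tmul_sum, map_sum]
            refine Finset.sum_congr rfl fun j _ => ?_
            exact gpsi_apply 𝒜 ℬ φ (a i)
              (SetLike.mul_mem_graded (ha' i) hu) (hb j) (b' j * v)
          rw [eL, eR]
          refine Finset.sum_congr rfl fun i _ => Finset.sum_congr rfl fun j _ => ?_
          rw [← zpow_add₀ neg1ne,
            neg_one_zpow_congr (e₁ := nb j * (-(na i)) + (-(nb j)) * m)
              (e₂ := (-(na i) + m) * nb j) ⟨-(m * nb j), by ring⟩]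
        rw [hL, hpA.2 u, hpB.2 v, hR]
      have key' : ∀ t : A ⊗[k] B,
          (φ t ⊗ₜ[k] (1 : C)) * pC = pC * ((1 : C) ⊗ₜ[k] φ t) := by
        intro t
        induction t using TensorProduct.induction_on with
        | zero => simp
        | add s t hs ht =>
            rw [map_add, TensorProduct.add_tmul, TensorProduct.tmul_add, add_mul,
              mul_add, hs, ht]
        | tmul u v =>
            rw [← DirectSum.sum_support_decompose 𝒜 u,
              ← DirectSum.sum_support_decompose ℬ v]
            simp only [TensorProduct.sum_tmul, TensorProduct.tmul_sum, map_sum,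
              Finset.sum_mul, Finset.mul_sum]
            refine Finset.sum_congr rfl fun n _ => Finset.sum_congr rfl fun m _ => ?_
            exact key m n _ _ (SetLike.coe_mem _) (SetLike.coe_mem _)
      intro x
      have h := key' (φ.symm x)
      simpa using h
  exact ⟨hsep, ⟨pC, hsep⟩⟩
end

section
/- Let A be a graded k-algebra whose underlying ungraded algebra is separable over k. Then the underlying ungraded algebra of the graded enveloping algebra A^e := A^op ⊗ᴳ A is semisimple. -/
open scoped TensorProduct

/-!
Averaging a `k`-linear projection onto a submodule over a separability idempotent
`∑ eᵢ ⊗ fᵢ`, as `m ↦ ∑ eᵢ • π (fᵢ • m)`, makes it `R`-linear, so over a field every module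
of an algebra with a separability idempotent is semisimple (as in Maschke's theorem).

It remains to produce a separability idempotent of `E`. If `p = ∑ aᵢ ⊗ bᵢ` is one for `A`, so
is its part of even total degree, since multiplying by a homogeneous `x` on either side shifts
the total degree by `|x|`. Taking `p` even (`|aᵢ| ≡ |bᵢ|` mod 2), the element
`∑ᵢⱼ (-1) ^ (|aᵢ| (1 + |aⱼ|)) φ (bᵢ ⊗ aⱼ) ⊗ φ (aᵢ ⊗ bⱼ)` of `E ⊗ E` is one for `E`: its sign
exactly cancels the Koszul signs of the products in `E`.
-/

section Averaging

variable {k R M N : Type*} [CommSemiring k] [Semiring R] [Algebra k R]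
  [AddCommMonoid M] [Module k M] [Module R M] [IsScalarTower k R M]
  [AddCommMonoid N] [Module k N] [Module R N] [IsScalarTower k R N]

noncomputable def averageBy (π : M →ₗ[k] N) : R ⊗[k] R →ₗ[k] M →ₗ[k] N :=
  TensorProduct.lift <| (LinearMap.llcomp k M N N).compl₁₂ (Algebra.lsmul k k N).toLinearMap
    (LinearMap.llcomp k M M N π ∘ₗ (Algebra.lsmul k k M).toLinearMap)

@[simp]
lemma averageBy_tmul (π : M →ₗ[k] N) (e f : R) (m : M) :
    averageBy π (e ⊗ₜ f) m = e • π (f • m) :=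
  rfl

lemma averageBy_tmul_one_mul (π : M →ₗ[k] N) (x : R) (q : R ⊗[k] R) (m : M) :
    averageBy π ((x ⊗ₜ 1) * q) m = x • averageBy π q m := by
  induction q using TensorProduct.induction_on with
  | zero => simp
  | tmul e f => simp [mul_smul]
  | add q q' hq hq' => simp [mul_add, hq, hq']

lemma averageBy_mul_one_tmul (π : M →ₗ[k] N) (x : R) (q : R ⊗[k] R) (m : M) :
    averageBy π (q * (1 ⊗ₜ x)) m = averageBy π q (x • m) := by
  induction q using TensorProduct.induction_on with
  | zero => simp
  | tmul e f => simp [mul_smul]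
  | add q q' hq hq' => simp [add_mul, hq, hq']

lemma averageBy_apply_coe_of_proj {P : Submodule R M} (π : M →ₗ[k] P) (hπ : ∀ x : P, π x = x)
    (q : R ⊗[k] R) (x : P) : averageBy π q (x : M) = LinearMap.mul' k R q • x := by
  induction q using TensorProduct.induction_on with
  | zero => simp
  | tmul e f => rw [averageBy_tmul, ← P.coe_smul, hπ, LinearMap.mul'_apply, mul_smul]
  | add q q' hq hq' => simp [hq, hq', add_smul]

end Averaging

lemma IsSepIdem.averageBy_smul {k R M N : Type*} [CommSemiring k] [Ring R] [Algebra k R]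
    [AddCommMonoid M] [Module k M] [Module R M] [IsScalarTower k R M]
    [AddCommMonoid N] [Module k N] [Module R N] [IsScalarTower k R N]
    {p : R ⊗[k] R} (hp : IsSepIdem k R p) (π : M →ₗ[k] N) (x : R) (m : M) :
    averageBy π p (x • m) = x • averageBy π p m := by
  rw [← averageBy_mul_one_tmul, ← hp.2, averageBy_tmul_one_mul]

section Semisimple

variable {k R : Type*} [Field k] [Ring R] [Algebra k R] {p : R ⊗[k] R}

theorem IsSepIdem.isSemisimpleModule {M : Type*} [AddCommGroup M] [Module k M] [Module R M]
    [IsScalarTower k R M] (hp : IsSepIdem k R p) : IsSemisimpleModule R M where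
  exists_isCompl P := by
    obtain ⟨π, hπ⟩ := (P.subtype.restrictScalars k).exists_leftInverse_of_injective (by simp)
    let ρ : M →ₗ[R] P := { averageBy π p with map_smul' := hp.averageBy_smul π }
    refine ⟨_, LinearMap.isCompl_of_proj (f := ρ) fun x => ?_⟩
    simp [ρ, averageBy_apply_coe_of_proj π (LinearMap.congr_fun hπ), hp.1]

theorem IsSepIdem.isSemisimpleRing (hp : IsSepIdem k R p) : IsSemisimpleRing R :=
  hp.isSemisimpleModule

end Semisimple

theorem LinearMap.eqOn_span₂ {R M N P : Type*} [CommSemiring R] [AddCommMonoid M] [Module R M]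
    [AddCommMonoid N] [Module R N] [AddCommMonoid P] [Module R P] {s : Set M} {t : Set N}
    {B₁ B₂ : M →ₗ[R] N →ₗ[R] P} (h : ∀ x ∈ s, ∀ y ∈ t, B₁ x y = B₂ x y) {x : M} {y : N}
    (hx : x ∈ Submodule.span R s) (hy : y ∈ Submodule.span R t) : B₁ x y = B₂ x y :=
  LinearMap.eqOn_span (f := B₁.flip y) (g := B₂.flip y)
    (fun x' hx' => LinearMap.eqOn_span (fun y' hy' => h x' hx' y' hy') hy) hx

lemma neg_one_zpow_eq_of_even_sub {k : Type*} [DivisionRing k] {s t : ℤ} (h : Even (s - t)) :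
    (-1 : k) ^ s = (-1 : k) ^ t := by
  rw [← sub_add_cancel s t, zpow_add₀ (neg_ne_zero.mpr one_ne_zero), h.neg_one_zpow, one_mul]

lemma neg_one_zpow_mul_neg_one_zpow {k : Type*} [DivisionRing k] (s t : ℤ) :
    (-1 : k) ^ s * (-1 : k) ^ t = (-1 : k) ^ (s + t) :=
  (zpow_add₀ (neg_ne_zero.mpr one_ne_zero) s t).symm

section Graded

variable {k A : Type*} [CommSemiring k] [Semiring A] [Algebra k A]
  (𝒜 : ℤ → Submodule k A) [GradedAlgebra 𝒜]

noncomputable def parityProj (e : ℤ) : A →ₗ[k] A :=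
  DirectSum.toModule k ℤ A (fun n => if Even (n - e) then (𝒜 n).subtype else 0) ∘ₗ
    (DirectSum.decomposeLinearEquiv 𝒜).toLinearMap

noncomputable def tensorParityProj (e : ℤ) : A ⊗[k] A →ₗ[k] A ⊗[k] A :=
  TensorProduct.map (parityProj 𝒜 0) (parityProj 𝒜 e) +
    TensorProduct.map (parityProj 𝒜 1) (parityProj 𝒜 (e + 1))

@[elab_as_elim]
theorem TensorProduct.induction_on_homogeneous {motive : A ⊗[k] A → Prop} (t : A ⊗[k] A)
    (zero : motive 0) (tmul : ∀ {α β : ℤ} {a b : A}, a ∈ 𝒜 α → b ∈ 𝒜 β → motive (a ⊗ₜ b))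
    (add : ∀ t t', motive t → motive t' → motive (t + t')) : motive t := by
  induction t using TensorProduct.induction_on with
  | zero => exact zero
  | add t t' ht ht' => exact add t t' ht ht'
  | tmul a b =>
    induction a using DirectSum.Decomposition.inductionOn 𝒜 with
    | zero => simpa using zero
    | add a a' ha ha' => simpa [TensorProduct.add_tmul] using add _ _ ha ha'
    | homogeneous a =>
      induction b using DirectSum.Decomposition.inductionOn 𝒜 with
      | zero => simpa using zero
      | add b b' hb hb' => simpa [TensorProduct.tmul_add] using add _ _ hb hb'
      | homogeneous b => exact tmul a.2 b.2

def homogeneousTensors : Set (A ⊗[k] A) :=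
  {t | ∃ α β a b, a ∈ 𝒜 α ∧ b ∈ 𝒜 β ∧ a ⊗ₜ b = t}

def evenTensors : Submodule k (A ⊗[k] A) :=
  Submodule.span k {t | ∃ α β a b, a ∈ 𝒜 α ∧ b ∈ 𝒜 β ∧ Even (α + β) ∧ a ⊗ₜ b = t}

lemma mem_span_homogeneousTensors (t : A ⊗[k] A) :
    t ∈ Submodule.span k (homogeneousTensors 𝒜) := by
  induction t using TensorProduct.induction_on_homogeneous 𝒜 with
  | zero => exact zero_mem _
  | tmul ha hb => exact Submodule.subset_span ⟨_, _, _, _, ha, hb, rfl⟩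
  | add t t' ht ht' => exact add_mem ht ht'

variable {𝒜}

lemma parityProj_of_mem {n : ℤ} {x : A} (hx : x ∈ 𝒜 n) (e : ℤ) :
    parityProj 𝒜 e x = if Even (n - e) then x else 0 := by
  have hdecomp := DirectSum.decomposeLinearEquiv_apply_coe 𝒜 n ⟨x, hx⟩
  rw [parityProj, LinearMap.comp_apply, LinearEquiv.coe_coe, hdecomp, DirectSum.toModule_lof]
  split_ifs <;> rfl

lemma parityProj_zero_one : parityProj 𝒜 0 (1 : A) = 1 := by
  simp [parityProj_of_mem (SetLike.one_mem_graded 𝒜)]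

lemma tensorParityProj_tmul {α β : ℤ} {a b : A} (ha : a ∈ 𝒜 α) (hb : b ∈ 𝒜 β) (e : ℤ) :
    tensorParityProj 𝒜 e (a ⊗ₜ b) = if Even (α + β - e) then a ⊗ₜ b else 0 := by
  simp only [tensorParityProj, LinearMap.add_apply, TensorProduct.map_tmul,
    parityProj_of_mem ha, parityProj_of_mem hb]
  by_cases hα : Even α <;> by_cases hβ : Even β <;> by_cases he : Even e <;>
    simp [hα, hβ, he, parity_simps, ← Int.not_even_iff_odd]

lemma tensorParityProj_tmul_one_mul {m : ℤ} {x : A} (hx : x ∈ 𝒜 m) (e : ℤ) (t : A ⊗[k] A) :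
    tensorParityProj 𝒜 (e + m) ((x ⊗ₜ 1) * t) = (x ⊗ₜ 1) * tensorParityProj 𝒜 e t := by
  induction t using TensorProduct.induction_on_homogeneous 𝒜 with
  | zero => simp
  | add t t' ht ht' => simp only [mul_add, map_add, ht, ht']
  | @tmul α β a b ha hb =>
    rw [Algebra.TensorProduct.tmul_mul_tmul, one_mul,
      tensorParityProj_tmul (SetLike.mul_mem_graded hx ha) hb, tensorParityProj_tmul ha hb,
      show m + α + β - (e + m) = α + β - e by ring]
    split_ifs <;> simp [Algebra.TensorProduct.tmul_mul_tmul]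

lemma tensorParityProj_mul_one_tmul {m : ℤ} {x : A} (hx : x ∈ 𝒜 m) (e : ℤ) (t : A ⊗[k] A) :
    tensorParityProj 𝒜 (e + m) (t * (1 ⊗ₜ x)) = tensorParityProj 𝒜 e t * (1 ⊗ₜ x) := by
  induction t using TensorProduct.induction_on_homogeneous 𝒜 with
  | zero => simp
  | add t t' ht ht' => simp only [add_mul, map_add, ht, ht']
  | @tmul α β a b ha hb =>
    rw [Algebra.TensorProduct.tmul_mul_tmul, mul_one,
      tensorParityProj_tmul ha (SetLike.mul_mem_graded hb hx), tensorParityProj_tmul ha hb,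
      show α + (β + m) - (e + m) = α + β - e by ring]
    split_ifs <;> simp [Algebra.TensorProduct.tmul_mul_tmul]

lemma mul'_tensorParityProj_zero (t : A ⊗[k] A) :
    LinearMap.mul' k A (tensorParityProj 𝒜 0 t) = parityProj 𝒜 0 (LinearMap.mul' k A t) := by
  induction t using TensorProduct.induction_on_homogeneous 𝒜 with
  | zero => simp
  | add t t' ht ht' => simp only [map_add, ht, ht']
  | @tmul α β a b ha hb =>
    rw [tensorParityProj_tmul ha hb, LinearMap.mul'_apply,
      parityProj_of_mem (SetLike.mul_mem_graded ha hb)]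
    split_ifs <;> simp

lemma tensorParityProj_zero_mem_evenTensors (t : A ⊗[k] A) :
    tensorParityProj 𝒜 0 t ∈ evenTensors 𝒜 := by
  induction t using TensorProduct.induction_on_homogeneous 𝒜 with
  | zero => simp
  | add t t' ht ht' => simpa only [map_add] using add_mem ht ht'
  | @tmul α β a b ha hb =>
    rw [tensorParityProj_tmul ha hb, sub_zero]
    split_ifs with h
    · exact Submodule.subset_span ⟨α, β, a, b, ha, hb, h, rfl⟩
    · exact zero_mem _

end Graded

theorem IsSepIdem.tensorParityProj_zero {k A : Type*} [CommSemiring k] [Ring A] [Algebra k A]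
    {𝒜 : ℤ → Submodule k A} [GradedAlgebra 𝒜] {p : A ⊗[k] A} (hp : IsSepIdem k A p) :
    IsSepIdem k A (tensorParityProj 𝒜 0 p) := by
  refine ⟨by rw [mul'_tensorParityProj_zero, hp.1, parityProj_zero_one], fun x => ?_⟩
  induction x using DirectSum.Decomposition.inductionOn 𝒜 with
  | zero => simp
  | add x x' hx hx' =>
    simp only [TensorProduct.add_tmul, TensorProduct.tmul_add, add_mul, mul_add, hx, hx']
  | @homogeneous m x =>
    have h := congrArg (tensorParityProj 𝒜 (0 + m)) (hp.2 x)
    rwa [tensorParityProj_tmul_one_mul x.2, tensorParityProj_mul_one_tmul x.2] at h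

section Enveloping

variable {k A E : Type*} [Field k] [Ring A] [Algebra k A] [Ring E] [Algebra k E]
  (𝒜 : ℤ → Submodule k A) [GradedAlgebra 𝒜] (φ : A ⊗[k] A ≃ₗ[k] E)

def IsGradedEnvelopingMul : Prop :=
  ∀ (m n m' n' : ℤ), ∀ x ∈ 𝒜 m, ∀ y ∈ 𝒜 n, ∀ x' ∈ 𝒜 m', ∀ y' ∈ 𝒜 n',
    φ (x ⊗ₜ[k] y) * φ (x' ⊗ₜ[k] y') = (-1 : k) ^ (n * m' + m * m') • φ ((x' * x) ⊗ₜ[k] (y * y'))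

noncomputable def parityTwist : A →ₗ[k] A := parityProj 𝒜 0 - parityProj 𝒜 1

noncomputable def signedCrossPairing (γ : ℤ) : A ⊗[k] A →ₗ[k] A ⊗[k] A →ₗ[k] E ⊗[k] E :=
  let cross : A ⊗[k] A →ₗ[k] A ⊗[k] A →ₗ[k] E ⊗[k] E := TensorProduct.curry <|
    TensorProduct.map φ φ ∘ₗ (TensorProduct.tensorTensorTensorComm k A A A A).toLinearMap ∘ₗ
      (TensorProduct.comm k A A).toLinearMap.rTensor _
  cross.compl₁₂ ((parityProj 𝒜 0).rTensor A) LinearMap.id +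
    (-1 : k) ^ γ • cross.compl₁₂ ((parityProj 𝒜 1).rTensor A) ((parityTwist 𝒜).rTensor A)

variable {𝒜 φ}

lemma parityTwist_of_mem {n : ℤ} {x : A} (hx : x ∈ 𝒜 n) :
    parityTwist 𝒜 x = (-1 : k) ^ n • x := by
  rw [parityTwist, LinearMap.sub_apply, parityProj_of_mem hx, parityProj_of_mem hx]
  rcases Int.even_or_odd n with hn | hn
  · simp [hn, hn.neg_one_zpow]
  · simp [Int.not_even_iff_odd.mpr hn, hn.neg_one_zpow]

lemma signedCrossPairing_tmul (γ : ℤ) {α α' : ℤ} {a a' : A} (ha : a ∈ 𝒜 α) (ha' : a' ∈ 𝒜 α')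
    (b b' : A) : signedCrossPairing 𝒜 φ γ (a ⊗ₜ b) (a' ⊗ₜ b') =
      (-1 : k) ^ (α * (γ + α')) • (φ (b ⊗ₜ a') ⊗ₜ φ (a ⊗ₜ b')) := by
  simp only [signedCrossPairing, LinearMap.add_apply, LinearMap.smul_apply,
    LinearMap.compl₁₂_apply, LinearMap.rTensor_tmul, LinearMap.id_apply, parityProj_of_mem ha,
    parityTwist_of_mem ha']
  by_cases hα : Even α
  · simp [hα, ← Int.not_even_iff_odd, (hα.mul_right _).neg_one_zpow]
  · have hsign : (-1 : k) ^ (α * (γ + α')) = (-1) ^ γ * (-1) ^ α' := by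
      rw [neg_one_zpow_mul_neg_one_zpow]
      exact neg_one_zpow_eq_of_even_sub (by simp [hα, parity_simps])
    simp [hα, ← Int.not_even_iff_odd, hsign, ← TensorProduct.smul_tmul', smul_smul]

variable (hφ : IsGradedEnvelopingMul 𝒜 φ)
include hφ

lemma mul'_signedCrossPairing {u : A ⊗[k] A} (hu : u ∈ evenTensors 𝒜) (v : A ⊗[k] A) :
    LinearMap.mul' k E (signedCrossPairing 𝒜 φ 1 u v) =
      φ (LinearMap.mul' k A u ⊗ₜ LinearMap.mul' k A v) := by
  have key := LinearMap.eqOn_span₂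
    (B₁ := (signedCrossPairing 𝒜 φ 1).compr₂ (LinearMap.mul' k E))
    (B₂ := ((TensorProduct.mk k A A).compl₁₂ (LinearMap.mul' k A) (LinearMap.mul' k A)).compr₂
      φ.toLinearMap) ?_ hu (mem_span_homogeneousTensors 𝒜 v)
  · simpa using key
  rintro _ ⟨α, β, a, b, ha, hb, hαβ, rfl⟩ _ ⟨α', β', a', b', ha', hb', rfl⟩
  simp only [LinearMap.compr₂_apply, LinearMap.compl₁₂_apply, TensorProduct.mk_apply,
    signedCrossPairing_tmul _ ha ha', map_smul, LinearMap.mul'_apply, LinearEquiv.coe_coe,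
    hφ _ _ _ _ _ hb _ ha' _ ha _ hb', smul_smul, neg_one_zpow_mul_neg_one_zpow]
  rw [neg_one_zpow_eq_of_even_sub (t := 0)
    (by simp [parity_simps, -Int.not_even_iff_odd] at hαβ ⊢; tauto), zpow_zero, one_smul]

lemma signedCrossPairing_mul_left {m n : ℤ} {x y : A} (hx : x ∈ 𝒜 m) (hy : y ∈ 𝒜 n)
    {u : A ⊗[k] A} (hu : u ∈ evenTensors 𝒜) (v : A ⊗[k] A) :
    (φ (x ⊗ₜ y) ⊗ₜ 1) * signedCrossPairing 𝒜 φ 1 u v =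
      signedCrossPairing 𝒜 φ (m + 1) (u * (1 ⊗ₜ x)) ((y ⊗ₜ 1) * v) := by
  have key := LinearMap.eqOn_span₂
    (B₁ := (signedCrossPairing 𝒜 φ 1).compr₂ (LinearMap.mulLeft k (φ (x ⊗ₜ y) ⊗ₜ 1)))
    (B₂ := (signedCrossPairing 𝒜 φ (m + 1)).compl₁₂ (LinearMap.mulRight k (1 ⊗ₜ x))
      (LinearMap.mulLeft k (y ⊗ₜ 1))) ?_ hu (mem_span_homogeneousTensors 𝒜 v)
  · simpa using key
  rintro _ ⟨α, β, a, b, ha, hb, hαβ, rfl⟩ _ ⟨α', β', a', b', ha', hb', rfl⟩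
  simp only [LinearMap.compr₂_apply, LinearMap.compl₁₂_apply, LinearMap.mulLeft_apply,
    LinearMap.mulRight_apply, Algebra.TensorProduct.tmul_mul_tmul, one_mul, mul_one,
    signedCrossPairing_tmul _ ha ha', signedCrossPairing_tmul _ ha (SetLike.mul_mem_graded hy ha'),
    mul_smul_comm, hφ _ _ _ _ _ hx _ hy _ hb _ ha', ← TensorProduct.smul_tmul', smul_smul,
    neg_one_zpow_mul_neg_one_zpow]
  congr 1
  exact neg_one_zpow_eq_of_even_sub
    (by simp [parity_simps, ← Int.not_even_iff_odd] at hαβ ⊢; tauto)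

lemma signedCrossPairing_mul_right {m n : ℤ} {x y : A} (hx : x ∈ 𝒜 m) (hy : y ∈ 𝒜 n)
    (u : A ⊗[k] A) {v : A ⊗[k] A} (hv : v ∈ evenTensors 𝒜) :
    signedCrossPairing 𝒜 φ 1 u v * (1 ⊗ₜ φ (x ⊗ₜ y)) =
      signedCrossPairing 𝒜 φ (m + 1) ((x ⊗ₜ 1) * u) (v * (1 ⊗ₜ y)) := by
  have key := LinearMap.eqOn_span₂
    (B₁ := (signedCrossPairing 𝒜 φ 1).compr₂ (LinearMap.mulRight k (1 ⊗ₜ φ (x ⊗ₜ y))))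
    (B₂ := (signedCrossPairing 𝒜 φ (m + 1)).compl₁₂ (LinearMap.mulLeft k (x ⊗ₜ 1))
      (LinearMap.mulRight k (1 ⊗ₜ y))) ?_ (mem_span_homogeneousTensors 𝒜 u) hv
  · simpa using key
  rintro _ ⟨α, β, a, b, ha, hb, rfl⟩ _ ⟨α', β', a', b', ha', hb', hαβ', rfl⟩
  simp only [LinearMap.compr₂_apply, LinearMap.compl₁₂_apply, LinearMap.mulLeft_apply,
    LinearMap.mulRight_apply, Algebra.TensorProduct.tmul_mul_tmul, one_mul, mul_one,
    signedCrossPairing_tmul _ ha ha', signedCrossPairing_tmul _ (SetLike.mul_mem_graded hx ha) ha',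
    smul_mul_assoc, hφ _ _ _ _ _ ha _ hb' _ hx _ hy, TensorProduct.tmul_smul, smul_smul,
    neg_one_zpow_mul_neg_one_zpow]
  congr 1
  exact neg_one_zpow_eq_of_even_sub
    (by simp [parity_simps, ← Int.not_even_iff_odd] at hαβ' ⊢; tauto)

theorem IsSepIdem.signedCrossPairing (hone : φ (1 ⊗ₜ 1) = 1) {p : A ⊗[k] A}
    (hp : IsSepIdem k A p) (hp_even : p ∈ evenTensors 𝒜) :
    IsSepIdem k E (signedCrossPairing 𝒜 φ 1 p p) := by
  refine ⟨by rw [mul'_signedCrossPairing hφ hp_even, hp.1, hone], fun e => ?_⟩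
  obtain ⟨t, rfl⟩ := φ.surjective e
  induction t using TensorProduct.induction_on_homogeneous 𝒜 with
  | zero => simp
  | add t t' ht ht' =>
    simp only [map_add, TensorProduct.add_tmul, TensorProduct.tmul_add, add_mul, mul_add, ht, ht']
  | @tmul m n x y hx hy =>
    rw [signedCrossPairing_mul_left hφ hx hy hp_even,
      signedCrossPairing_mul_right hφ hx hy _ hp_even, ← hp.2 x, hp.2 y]

end Enveloping

theorem graded_enveloping_algebra_semisimple
    {k A E : Type*} [Field k] [Ring A] [Algebra k A] [Ring E] [Algebra k E]
    (𝒜 : ℤ → Submodule k A) [GradedAlgebra 𝒜]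
    -- `E` realises the graded enveloping algebra `Aᵒᵖ ⊗ᴳ A`
    (φ : A ⊗[k] A ≃ₗ[k] E)
    (hone : φ ((1 : A) ⊗ₜ[k] (1 : A)) = 1)
    (hmul : ∀ (m n m' n' : ℤ), ∀ x ∈ 𝒜 m, ∀ y ∈ 𝒜 n, ∀ x' ∈ 𝒜 m', ∀ y' ∈ 𝒜 n',
      φ (x ⊗ₜ[k] y) * φ (x' ⊗ₜ[k] y')
        = ((-1 : k) ^ (n * m' + m * m')) • φ ((x' * x) ⊗ₜ[k] (y * y')))
    -- the underlying ungraded algebra of `A` is separable over `k`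
    (hsep : ∃ p : A ⊗[k] A, IsSepIdem k A p) :
    -- the underlying ungraded algebra of `Aᵉ` is semisimple
    IsSemisimpleRing E := by
  obtain ⟨p, hp⟩ := hsep
  have hp₀ : IsSepIdem k A (tensorParityProj 𝒜 0 p) := hp.tensorParityProj_zero
  exact (IsSepIdem.signedCrossPairing hmul hone hp₀
    (tensorParityProj_zero_mem_evenTensors p)).isSemisimpleRing
end
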